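/- arXiv:1206.2017 — 2 statements merged into one kernel-verified Lean document; each statement's English description precedes it below -/
import Mathlib

section
/- Let a, b > 0. If V : ℝ → ℝ is twice continuously differentiable, monotone increasing, satisfies a²·V''(z) = b²·ψ'(V(z)) for all z ∈ ℝ with ψ'(u) = 2u(u²−1), V(0) = 0, and V(z) → ±1 as z → ±∞, then V(z) = tanh((b/a)z) for all z ∈ ℝ. -/
open Filter

lemma hasDerivAt_tanh' (x : ℝ) :
    HasDerivAt Real.tanh (1 - Real.tanh x ^ 2) x := by
  have h := (Real.hasDerivAt_sinh x).div (Real.hasDerivAt_cosh x) (Real.cosh_pos x).ne'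
  replace h : HasDerivAt Real.tanh ((Real.cosh x * Real.cosh x - Real.sinh x * Real.sinh x) / Real.cosh x ^ 2) x :=
    h.congr_of_eventuallyEq (Eventually.of_forall fun y => Real.tanh_eq_sinh_div_cosh y)
  convert h using 1
  have hc : Real.cosh x ≠ 0 := (Real.cosh_pos x).ne'
  rw [Real.tanh_eq_sinh_div_cosh]
  field_simp

lemma tanh_mem_Icc (x : ℝ) : Real.tanh x ∈ Set.Icc (-1 : ℝ) 1 := by
  have hcp := Real.cosh_pos x
  have h1 : Real.tanh x ^ 2 ≤ 1 := by
    rw [Real.tanh_eq_sinh_div_cosh, div_pow, div_le_one (by positivity)]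
    nlinarith [Real.cosh_sq_sub_sinh_sq x]
  constructor <;> nlinarith

/-- Uniqueness of the inner zero-order profile: any twice continuously
differentiable, monotone increasing solution of `a² V'' = b² ψ'(V)` with `V(0)=0` and
`V → ±1` at `±∞` equals `tanh((b/a)z)`. -/
theorem stmt_1 (a b : ℝ) (ha : 0 < a) (hb : 0 < b)
    (V : ℝ → ℝ) (hV : ContDiff ℝ 2 V) (hmono : Monotone V)
    (hode : ∀ z : ℝ, a ^ 2 * deriv (deriv V) z = b ^ 2 * (2 * V z * ((V z) ^ 2 - 1)))
    (h0 : V 0 = 0)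
    (htop : Tendsto V atTop (nhds 1))
    (hbot : Tendsto V atBot (nhds (-1))) :
    ∀ z : ℝ, V z = Real.tanh ((b / a) * z) := by
  set c : ℝ := b / a with hc
  have hc0 : 0 < c := div_pos hb ha
  -- regularity
  have h2 : (2 : WithTop ℕ∞) = 1 + 1 := by norm_num
  rw [h2] at hV
  have hVd : Differentiable ℝ V := (contDiff_succ_iff_deriv.mp hV).1
  have hV1 : ContDiff ℝ 1 (deriv V) := (contDiff_succ_iff_deriv.mp hV).2.2
  have hVd' : Differentiable ℝ (deriv V) := hV1.differentiable one_ne_zero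
  -- bounds on V
  have hle1 : ∀ z, V z ≤ 1 := fun z =>
    ge_of_tendsto htop (eventually_atTop.mpr ⟨z, fun t ht => hmono ht⟩)
  have hge1 : ∀ z, -1 ≤ V z := fun z =>
    le_of_tendsto hbot (eventually_atBot.mpr ⟨z, fun t ht => hmono ht⟩)
  -- deriv V nonneg
  have hd0 : ∀ z, 0 ≤ deriv V z := by
    intro z
    have h := hasDerivAt_iff_tendsto_slope.mp (hVd z).hasDerivAt
    refine ge_of_tendsto h (eventually_nhdsWithin_of_forall fun t ht => ?_)
    rw [slope_def_field]
    rcases lt_or_gt_of_ne (Ne.symm ht) with h' | h'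
    · exact div_nonneg (sub_nonneg.2 (hmono h'.le)) (sub_nonneg.2 h'.le)
    · exact div_nonneg_of_nonpos (sub_nonpos.2 (hmono h'.le)) (sub_nonpos.2 h'.le)
  -- energy
  set E : ℝ → ℝ := fun z => a ^ 2 * (deriv V z) ^ 2 - b ^ 2 * (1 - (V z) ^ 2) ^ 2 with hE
  have hEderiv : ∀ z, HasDerivAt E 0 z := by
    intro z
    have h1 : HasDerivAt (fun z => a ^ 2 * (deriv V z) ^ 2)
        (a ^ 2 * (2 * deriv V z ^ 1 * deriv (deriv V) z)) z :=
      (((hVd' z).hasDerivAt).pow 2).const_mul _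
    have h2' : HasDerivAt (fun z => b ^ 2 * (1 - (V z) ^ 2) ^ 2)
        (b ^ 2 * (2 * (1 - V z ^ 2) ^ 1 * (0 - 2 * V z ^ 1 * deriv V z))) z :=
      ((((hasDerivAt_const z (1:ℝ)).sub ((hVd z).hasDerivAt.pow 2)).pow 2)).const_mul _
    have : HasDerivAt (fun z => a ^ 2 * (deriv V z) ^ 2 - b ^ 2 * (1 - (V z) ^ 2) ^ 2)
        (a ^ 2 * (2 * deriv V z ^ 1 * deriv (deriv V) z) - b ^ 2 * (2 * (1 - V z ^ 2) ^ 1 * (0 - 2 * V z ^ 1 * deriv V z))) z :=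
      h1.sub h2'
    convert this using 1
    simp only [pow_one]
    linear_combination (-2 * deriv V z) * hode z
  have hEconst : ∀ z, E z = E 0 := fun z =>
    is_const_of_deriv_eq_zero (fun t => (hEderiv t).differentiableAt)
      (fun t => (hEderiv t).deriv) z 0
  -- the constant is nonnegative: limit of a²(V')² at +∞
  have hCnonneg : 0 ≤ E 0 := by
    have htend : Tendsto (fun z => E 0 + b ^ 2 * (1 - (V z) ^ 2) ^ 2) atTop
        (nhds (E 0 + b ^ 2 * (1 - (1:ℝ) ^ 2) ^ 2)) := by
      apply Tendsto.const_add
      apply Tendsto.const_mul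
      exact ((continuous_const.sub ((continuous_pow 2))).pow 2).continuousAt.tendsto.comp htop
    simp only [one_pow, sub_self] at htend
    norm_num at htend
    refine ge_of_tendsto htend (Eventually.of_forall fun z => ?_)
    have h1 := hEconst z
    have h2' : E 0 + b ^ 2 * (1 - (V z) ^ 2) ^ 2 = a ^ 2 * (deriv V z) ^ 2 := by
      simp only [hE] at h1 ⊢; linarith
    rw [h2']
    positivity
  -- the constant is zero
  have hCzero : E 0 = 0 := by
    rcases eq_or_lt_of_le hCnonneg with h | h
    · exact h.symm
    · exfalso
      set m : ℝ := Real.sqrt (E 0) / a with hm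
      have hm0 : 0 < m := div_pos (Real.sqrt_pos.mpr h) ha
      have hdm : ∀ z, m ≤ deriv V z := by
        intro z
        have h1 : E 0 ≤ a ^ 2 * (deriv V z) ^ 2 := by
          rw [← hEconst z]
          simp only [hE]
          nlinarith [sq_nonneg (1 - (V z) ^ 2), sq_nonneg b]
        have h2' : Real.sqrt (E 0) ≤ a * deriv V z := by
          have h3 : Real.sqrt (E 0) ≤ Real.sqrt (a ^ 2 * (deriv V z) ^ 2) :=
            Real.sqrt_le_sqrt h1
          rwa [show a ^ 2 * (deriv V z) ^ 2 = (a * deriv V z) ^ 2 by ring,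
            Real.sqrt_sq (mul_nonneg ha.le (hd0 z))] at h3
        rw [hm, div_le_iff₀ ha]
        linarith [h2']
      -- V grows at least linearly
      have hlin : ∀ x : ℝ, HasDerivAt (fun z => V z - m * z) (deriv V x - m) x := by
        intro x
        exact (hVd x).hasDerivAt.sub (by simpa using (hasDerivAt_id x).const_mul m)
      have hmonog : Monotone (fun z => V z - m * z) := by
        apply monotone_of_deriv_nonneg
        · exact fun x => (hlin x).differentiableAt
        · intro x
          rw [(hlin x).deriv]
          linarith [hdm x]
      have hgrow : (2 : ℝ) ≤ V (2 / m) := by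
        have h4 := hmonog (show (0:ℝ) ≤ 2 / m by positivity)
        simp only [mul_zero, sub_zero, h0, zero_sub] at h4
        have h2m : m * (2 / m) = 2 := by field_simp
        nlinarith [h4]
      linarith [hle1 (2 / m), hgrow]
  -- first-order ODE
  have hODE : ∀ z, HasDerivAt V (c * (1 - (V z) ^ 2)) z := by
    intro z
    have hEz : a ^ 2 * (deriv V z) ^ 2 = b ^ 2 * (1 - (V z) ^ 2) ^ 2 := by
      have h1 := hEconst z
      rw [hCzero] at h1
      simp only [hE] at h1
      linarith
    have hV2 : (V z) ^ 2 ≤ 1 := by nlinarith [hle1 z, hge1 z]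
    have habs : a * deriv V z = b * (1 - (V z) ^ 2) := by
      have h1 : (a * deriv V z) ^ 2 = (b * (1 - (V z) ^ 2)) ^ 2 := by nlinarith [hEz]
      have h2' : 0 ≤ a * deriv V z := mul_nonneg ha.le (hd0 z)
      have h3 : 0 ≤ b * (1 - (V z) ^ 2) := mul_nonneg hb.le (by linarith)
      nlinarith [sq_nonneg (a * deriv V z - b * (1 - (V z) ^ 2)),
        sq_nonneg (a * deriv V z + b * (1 - (V z) ^ 2))]
    have h5 : deriv V z = c * (1 - (V z) ^ 2) := by
      rw [hc]
      field_simp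
      linarith [habs]
    rw [← h5]
    exact (hVd z).hasDerivAt
  -- uniqueness
  intro z
  set g : ℝ → ℝ := fun t => Real.tanh (c * t) with hg
  have hgderiv : ∀ t, HasDerivAt g (c * (1 - (g t) ^ 2)) t := by
    intro t
    have h1 : HasDerivAt (fun t : ℝ => c * t) c t := by
      simpa using (hasDerivAt_id t).const_mul c
    have h2' := (hasDerivAt_tanh' (c * t)).comp t h1
    have h3 : HasDerivAt g ((1 - Real.tanh (c * t) ^ 2) * c) t := h2'
    convert h3 using 1
    simp only [hg]
    ring
  set K : NNReal := ⟨2 * c, by positivity⟩ with hK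
  have hlip : ∀ t : ℝ, LipschitzOnWith K (fun y : ℝ => c * (1 - y ^ 2)) (Set.Icc (-1 : ℝ) 1) := by
    intro t
    rw [lipschitzOnWith_iff_dist_le_mul]
    intro x hx y hy
    simp only [Real.dist_eq]
    have hx' : |x| ≤ 1 := abs_le.mpr ⟨hx.1, hx.2⟩
    have hy' : |y| ≤ 1 := abs_le.mpr ⟨hy.1, hy.2⟩
    have hKval : (K : ℝ) = 2 * c := rfl
    rw [hKval]
    have h1 : c * (1 - x ^ 2) - c * (1 - y ^ 2) = -(c * ((x + y) * (x - y))) := by ring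
    rw [h1, abs_neg, abs_mul, abs_mul, abs_of_pos hc0]
    have h2' : |x + y| ≤ 2 := by
      calc |x + y| ≤ |x| + |y| := abs_add_le x y
        _ ≤ 2 := by linarith
    calc c * (|x + y| * |x - y|) ≤ c * (2 * |x - y|) := by
          apply mul_le_mul_of_nonneg_left _ hc0.le
          exact mul_le_mul_of_nonneg_right h2' (abs_nonneg _)
      _ = 2 * c * |x - y| := by ring
  set R : ℝ := |z| + 1 with hR
  have hzR : z ∈ Set.Icc (-R) R :=
    ⟨by rw [hR]; linarith [neg_abs_le z], by rw [hR]; linarith [le_abs_self z]⟩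
  have h0R : (0 : ℝ) ∈ Set.Ioo (-R) R :=
    ⟨by rw [hR]; linarith [abs_nonneg z], by rw [hR]; linarith [abs_nonneg z]⟩
  have hfin := ODE_solution_unique_of_mem_Icc (v := fun _ y => c * (1 - y ^ 2))
    (s := fun _ => Set.Icc (-1 : ℝ) 1) (fun t _ => hlip t) h0R
    (hVd.continuous.continuousOn)
    (fun t _ => hODE t)
    (fun t _ => ⟨hge1 t, hle1 t⟩)
    (continuousOn_of_forall_continuousAt fun t _ => (hgderiv t).continuousAt)
    (fun t _ => hgderiv t)
    (fun t _ => tanh_mem_Icc (c * t))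
    (by simp [hg, h0])
  exact hfin hzR
end

section
/- ∫_ℝ x²·tanh(x)²·sech(x)⁴ dx = π²/45. Equivalently, for a, b > 0 and U(z) = tanh((b/a)z), one has ∫_ℝ z²·U(z)²·U'(z)² dz = (π²/45)·(a/b). -/
open Real MeasureTheory Set Filter Topology

noncomputable def h11 (x : ℝ) : ℝ := x ^ 2 * Real.tanh x ^ 2 * (1 / Real.cosh x) ^ 4

noncomputable def g11 (x : ℝ) : ℝ :=
  x ^ 2 * (16 * Real.exp (-2*x) ^ 2 * (1 - Real.exp (-2*x)) ^ 2 / (1 + Real.exp (-2*x)) ^ 6)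

noncomputable def phi11 (x : ℝ) : ℝ :=
  x ^ 2 * (((1 - Real.exp (-2*x)) / (1 + Real.exp (-2*x))) ^ 3 / 3
      - ((1 - Real.exp (-2*x)) / (1 + Real.exp (-2*x))) ^ 5 / 5 - 2/15)
  - 2*x * ((2/15) * (Real.log (1 + Real.exp (-2*x))
      - (Real.exp (-2*x) - 4 * Real.exp (-2*x) ^ 2 + Real.exp (-2*x) ^ 3)
          / (1 + Real.exp (-2*x)) ^ 4))
  + (4/15) * ((1/2) * (-(1 / (1 + Real.exp (-2*x))) + 3 / (1 + Real.exp (-2*x)) ^ 2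
      - 2 / (1 + Real.exp (-2*x)) ^ 3))

lemma h11_eq_g11 (x : ℝ) : h11 x = g11 x := by
  unfold h11 g11
  have he2 : Real.exp (-2*x) = Real.exp (-x) * Real.exp (-x) := by
    rw [← Real.exp_add]; ring_nf
  have hc : Real.cosh x ≠ 0 := (Real.cosh_pos x).ne'
  have hx : Real.exp x ≠ 0 := (Real.exp_pos x).ne'
  have h1 : (1 : ℝ) + Real.exp (-2*x) ≠ 0 := by positivity
  rw [Real.tanh_eq_sinh_div_cosh, Real.sinh_eq, Real.cosh_eq] at *
  rw [he2, Real.exp_neg] at *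
  field_simp
  ring

lemma phi11_hasDerivAt (x : ℝ) :
    HasDerivAt phi11 (g11 x - (4/15) * Real.log (1 + Real.exp (-2*x))) x := by
  have hq : (0:ℝ) < Real.exp (-2*x) := Real.exp_pos _
  have h1q : (0:ℝ) < 1 + Real.exp (-2*x) := by linarith
  have h1q' : (1:ℝ) + Real.exp (-2*x) ≠ 0 := h1q.ne'
  have hE : HasDerivAt (fun y : ℝ => Real.exp (-2*y)) (Real.exp (-2*x) * (-2)) x := by
    have h1 : HasDerivAt (fun y : ℝ => -2*y) (-2) x := by
      simpa using (hasDerivAt_id x).const_mul (-2 : ℝ)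
    exact h1.exp
  have hnum : HasDerivAt (fun y : ℝ => 1 - Real.exp (-2*y)) (0 - Real.exp (-2*x) * (-2)) x :=
    (hasDerivAt_const x (1:ℝ)).sub hE
  have hden : HasDerivAt (fun y : ℝ => 1 + Real.exp (-2*y)) (0 + Real.exp (-2*x) * (-2)) x :=
    (hasDerivAt_const x (1:ℝ)).add hE
  have ht := hnum.div hden h1q'
  have hF := (((ht.pow 3).div_const 3).sub ((ht.pow 5).div_const 5)).sub_const (2/15 : ℝ)
  have hx2 := hasDerivAt_pow 2 x
  have hA := hx2.mul hF
  have h2x : HasDerivAt (fun y : ℝ => 2*y) 2 x := by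
    simpa using (hasDerivAt_id x).const_mul (2 : ℝ)
  have hlog := hden.log h1q'
  have hnum2 := (hE.sub ((hE.pow 2).const_mul 4)).add (hE.pow 3)
  have hrat := hnum2.div (hden.pow 4) (pow_ne_zero 4 h1q')
  have hG := (hlog.sub hrat).const_mul (2/15 : ℝ)
  have hB := h2x.mul hG
  have hinv1 := ((hasDerivAt_const x (1:ℝ)).div hden h1q').neg
  have hinv2 := (hasDerivAt_const x (3:ℝ)).div (hden.pow 2) (pow_ne_zero 2 h1q')
  have hinv3 := (hasDerivAt_const x (2:ℝ)).div (hden.pow 3) (pow_ne_zero 3 h1q')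
  have hC := (((hinv1.add hinv2).sub hinv3).const_mul (1/2 : ℝ)).const_mul (4/15 : ℝ)
  have H := (hA.sub hB).add hC
  have Hphi : HasDerivAt phi11 _ x := H
  convert Hphi using 1
  unfold g11
  simp only [Pi.pow_apply, Pi.div_apply, Pi.sub_apply, Pi.add_apply]
  push_cast
  field_simp
  ring

lemma phi11_tendsto : Tendsto phi11 atTop (𝓝 0) := by
  have hE0 : Tendsto (fun x : ℝ => Real.exp (-2*x)) atTop (𝓝 0) := by
    have h := Real.tendsto_exp_neg_atTop_nhds_zero
    have h2 := h.mul h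
    rw [mul_zero] at h2
    refine h2.congr fun x => ?_
    rw [← Real.exp_add]; ring_nf
  have hxE : Tendsto (fun x : ℝ => x * Real.exp (-2*x)) atTop (𝓝 0) := by
    have h1 := tendsto_pow_mul_exp_neg_atTop_nhds_zero 1
    have h2 := h1.mul Real.tendsto_exp_neg_atTop_nhds_zero
    rw [mul_zero] at h2
    refine h2.congr fun x => ?_
    rw [mul_assoc, ← Real.exp_add, pow_one]; ring_nf
  have hx2E : Tendsto (fun x : ℝ => x ^ 2 * Real.exp (-2*x)) atTop (𝓝 0) := by
    have h1 := tendsto_pow_mul_exp_neg_atTop_nhds_zero 2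
    have h2 := h1.mul Real.tendsto_exp_neg_atTop_nhds_zero
    rw [mul_zero] at h2
    refine h2.congr fun x => ?_
    rw [mul_assoc, ← Real.exp_add]; ring_nf
  -- continuous rational pieces
  have hP : Tendsto (fun x : ℝ => (-4 * Real.exp (-2*x) + (4/3) * Real.exp (-2*x) ^ 2
      - (4/3) * Real.exp (-2*x) ^ 3 - (4/15) * Real.exp (-2*x) ^ 4)
      / (1 + Real.exp (-2*x)) ^ 5) atTop (𝓝 0) := by
    have hc : ContinuousAt (fun q : ℝ => (-4 * q + (4/3) * q ^ 2 - (4/3) * q ^ 3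
        - (4/15) * q ^ 4) / (1 + q) ^ 5) 0 := by
      apply ContinuousAt.div (by fun_prop) (by fun_prop)
      norm_num
    have := hc.tendsto.comp hE0
    simpa [Function.comp_def] using this
  have hQ : Tendsto (fun x : ℝ => (4/15) * ((1 - 4 * Real.exp (-2*x) + Real.exp (-2*x) ^ 2)
      / (1 + Real.exp (-2*x)) ^ 4)) atTop (𝓝 ((4/15) * 1)) := by
    have hc : ContinuousAt (fun q : ℝ => (1 - 4 * q + q ^ 2) / (1 + q) ^ 4) 0 := by
      apply ContinuousAt.div (by fun_prop) (by fun_prop)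
      norm_num
    have := (hc.tendsto.comp hE0).const_mul (4/15 : ℝ)
    simpa using this
  have hT : Tendsto (fun x : ℝ => (4/15) * ((1/2) * (-(1 / (1 + Real.exp (-2*x)))
      + 3 / (1 + Real.exp (-2*x)) ^ 2 - 2 / (1 + Real.exp (-2*x)) ^ 3))) atTop (𝓝 0) := by
    have hc : ContinuousAt (fun q : ℝ => (4/15) * ((1/2) * (-(1 / (1 + q))
        + 3 / (1 + q) ^ 2 - 2 / (1 + q) ^ 3))) 0 := by
      have h1 : ContinuousAt (fun q : ℝ => 1 / (1 + q)) 0 :=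
        ContinuousAt.div (by fun_prop) (by fun_prop) (by norm_num)
      have h2 : ContinuousAt (fun q : ℝ => 3 / (1 + q) ^ 2) 0 :=
        ContinuousAt.div (by fun_prop) (by fun_prop) (by norm_num)
      have h3 : ContinuousAt (fun q : ℝ => 2 / (1 + q) ^ 3) 0 :=
        ContinuousAt.div (by fun_prop) (by fun_prop) (by norm_num)
      exact (((h1.neg.add h2).sub h3).const_mul _).const_mul _
    have := hc.tendsto.comp hE0
    norm_num at this
    exact this.congr fun x => by norm_num
  -- x * log(1 + E) → 0 by squeeze
  have hxlog : Tendsto (fun x : ℝ => x * Real.log (1 + Real.exp (-2*x))) atTop (𝓝 0) := by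
    apply squeeze_zero' (g := fun x : ℝ => x * Real.exp (-2*x))
    · filter_upwards [eventually_ge_atTop (0:ℝ)] with x hx
      have : (0:ℝ) ≤ Real.log (1 + Real.exp (-2*x)) :=
        Real.log_nonneg (by have := Real.exp_pos (-2*x); linarith)
      positivity
    · filter_upwards [eventually_ge_atTop (0:ℝ)] with x hx
      have h1 : Real.log (1 + Real.exp (-2*x)) ≤ Real.exp (-2*x) := by
        have := Real.log_le_sub_one_of_pos
          (show (0:ℝ) < 1 + Real.exp (-2*x) by have := Real.exp_pos (-2*x); linarith)
        linarith
      exact mul_le_mul_of_nonneg_left h1 hx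
    · exact hxE
  -- combine
  have hA : Tendsto (fun x : ℝ => (x ^ 2 * Real.exp (-2*x)) *
      ((-4 * Real.exp (-2*x) + (4/3) * Real.exp (-2*x) ^ 2 - (4/3) * Real.exp (-2*x) ^ 3
        - (4/15) * Real.exp (-2*x) ^ 4) / (1 + Real.exp (-2*x)) ^ 5)) atTop (𝓝 0) := by
    simpa using hx2E.mul hP
  have hB2 : Tendsto (fun x : ℝ => (x * Real.exp (-2*x)) *
      ((4/15) * ((1 - 4 * Real.exp (-2*x) + Real.exp (-2*x) ^ 2)
        / (1 + Real.exp (-2*x)) ^ 4))) atTop (𝓝 0) := by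
    simpa using hxE.mul hQ
  have hB1 : Tendsto (fun x : ℝ => (4/15) * (x * Real.log (1 + Real.exp (-2*x))))
      atTop (𝓝 0) := by simpa using hxlog.const_mul (4/15 : ℝ)
  have H := ((hA.sub hB1).add hB2).add hT
  rw [show ((((0:ℝ) - 0) + 0) + 0) = 0 by ring] at H
  refine H.congr fun x => ?_
  have hq : (0:ℝ) < Real.exp (-2*x) := Real.exp_pos _
  have h1q : (1:ℝ) + Real.exp (-2*x) ≠ 0 := by positivity
  unfold phi11
  field_simp
  ring

lemma h11_cont : Continuous h11 := by
  unfold h11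
  have h1 : Continuous fun x : ℝ => 1 / Real.cosh x :=
    continuous_const.div Real.continuous_cosh fun x => (Real.cosh_pos x).ne'
  have h2 : Continuous Real.tanh := by
    have : Real.tanh = fun x => Real.sinh x / Real.cosh x := funext Real.tanh_eq_sinh_div_cosh
    rw [this]
    exact Real.continuous_sinh.div Real.continuous_cosh fun x => (Real.cosh_pos x).ne'
  fun_prop

lemma h11_integrableOn : IntegrableOn h11 (Ioi 0) := by
  refine Integrable.mono' ((exp_neg_integrableOn_Ioi 0 (by norm_num : (0:ℝ) < 2)).const_mul 16)
    h11_cont.aestronglyMeasurable.restrict ?_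
  filter_upwards [ae_restrict_mem measurableSet_Ioi] with x hx
  have hx0 : (0:ℝ) < x := hx
  have hcp := Real.cosh_pos x
  have hh0 : 0 ≤ h11 x := by unfold h11; positivity
  rw [Real.norm_of_nonneg hh0]
  have htanh : Real.tanh x ^ 2 ≤ 1 := by
    rw [Real.tanh_eq_sinh_div_cosh, div_pow]
    rw [div_le_one (by positivity)]
    nlinarith [Real.cosh_sq_sub_sinh_sq x]
  have hsech : 1 / Real.cosh x ≤ 2 * Real.exp (-x) := by
    rw [Real.cosh_eq, Real.exp_neg]
    rw [div_le_iff₀ (by positivity)]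
    have h1 : 1 ≤ Real.exp x * (Real.exp x)⁻¹ * 1 := by
      rw [mul_inv_cancel₀ (Real.exp_pos x).ne']; norm_num
    nlinarith [Real.exp_pos x, Real.exp_pos (-x), inv_pos.mpr (Real.exp_pos x),
      sq_nonneg (Real.exp x - 1)]
  have hxexp : x ≤ Real.exp x := by have := Real.add_one_le_exp x; linarith
  have hx2 : x ^ 2 ≤ Real.exp x ^ 2 := by nlinarith
  have hchain : h11 x ≤ Real.exp x ^ 2 * 1 * (2 * Real.exp (-x)) ^ 4 := by
    unfold h11
    have h1 : (1 / Real.cosh x) ^ 4 ≤ (2 * Real.exp (-x)) ^ 4 := by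
      apply pow_le_pow_left₀ (by positivity) hsech
    have h2 : Real.tanh x ^ 2 * (1 / Real.cosh x) ^ 4 ≤ 1 * (2 * Real.exp (-x)) ^ 4 := by
      apply mul_le_mul htanh h1 (by positivity) (by norm_num)
    calc x ^ 2 * Real.tanh x ^ 2 * (1 / Real.cosh x) ^ 4
        = x ^ 2 * (Real.tanh x ^ 2 * (1 / Real.cosh x) ^ 4) := by ring
      _ ≤ Real.exp x ^ 2 * (1 * (2 * Real.exp (-x)) ^ 4) := by
          apply mul_le_mul hx2 h2 (by positivity) (by positivity)
      _ = Real.exp x ^ 2 * 1 * (2 * Real.exp (-x)) ^ 4 := by ring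
  refine hchain.trans (le_of_eq ?_)
  have e1 : Real.exp x * Real.exp (-x) = 1 := by rw [← Real.exp_add]; simp
  have e2 : Real.exp (-x) * Real.exp (-x) = Real.exp (-(2*x)) := by
    rw [← Real.exp_add]; ring_nf
  calc Real.exp x ^ 2 * 1 * (2 * Real.exp (-x)) ^ 4
      = 16 * (Real.exp x * Real.exp (-x)) ^ 2 * (Real.exp (-x) * Real.exp (-x)) := by ring
    _ = 16 * Real.exp (-(2*x)) := by rw [e1, e2]; ring
    _ = 16 * Real.exp (-2*x) := by ring_nf

lemma log11_integrableOn :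
    IntegrableOn (fun x : ℝ => Real.log (1 + Real.exp (-2*x))) (Ioi 0) := by
  have hcont : Continuous fun x : ℝ => Real.log (1 + Real.exp (-2*x)) := by
    apply Continuous.log (by fun_prop)
    intro x; have := Real.exp_pos (-2*x); positivity
  refine Integrable.mono' (exp_neg_integrableOn_Ioi 0 (by norm_num : (0:ℝ) < 2))
    hcont.aestronglyMeasurable.restrict ?_
  filter_upwards [ae_restrict_mem measurableSet_Ioi] with x hx
  have hq : (0:ℝ) < Real.exp (-2*x) := Real.exp_pos _
  have h0 : (0:ℝ) ≤ Real.log (1 + Real.exp (-2*x)) := Real.log_nonneg (by linarith)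
  rw [Real.norm_of_nonneg h0]
  have := Real.log_le_sub_one_of_pos (show (0:ℝ) < 1 + Real.exp (-2*x) by linarith)
  calc Real.log (1 + Real.exp (-2*x)) ≤ (1 + Real.exp (-2*x)) - 1 := this
    _ = Real.exp (-2*x) := by ring

lemma zeta_two_succ : HasSum (fun n : ℕ => 1 / ((n : ℝ) + 1) ^ 2) (π ^ 2 / 6) := by
  have h := hasSum_zeta_two
  have h2 := (hasSum_nat_add_iff' (f := fun n : ℕ => 1 / (n : ℝ) ^ 2) 1).mpr h
  simp only [Finset.range_one, Finset.sum_singleton, Nat.cast_zero] at h2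
  norm_num at h2
  refine h2.congr_fun fun n => ?_
  push_cast
  ring_nf

lemma alt_zeta_two : HasSum (fun n : ℕ => ((-1 : ℝ)) ^ n / ((n : ℝ) + 1) ^ 2) (π ^ 2 / 12) := by
  have h6 := zeta_two_succ
  set d : ℕ → ℝ := fun n => if Even n then 0 else 2 / ((n : ℝ) + 1) ^ 2 with hd_def
  have hd : HasSum d (π ^ 2 / 12) := by
    have hinj : Function.Injective (fun k : ℕ => 2 * k + 1) := by
      intro a b hab; simp only [] at hab; omega
    rw [← Function.Injective.hasSum_iff hinj ?_]
    · have hcomp : (d ∘ fun k : ℕ => 2 * k + 1) = fun k : ℕ => (1/2) * (1 / ((k:ℝ) + 1) ^ 2) := by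
        funext k
        simp only [hd_def, Function.comp_apply]
        rw [if_neg (by simp [Nat.even_add_one, parity_simps])]
        push_cast
        field_simp
        ring
      rw [hcomp]
      have := h6.mul_left (1/2 : ℝ)
      convert this using 1
      · rfl
      ring
    · intro m hm
      simp only [Set.mem_range, not_exists] at hm
      have hme : Even m := by
        rcases Nat.even_or_odd m with h | h
        · exact h
        · exfalso; obtain ⟨k, hk⟩ := h; exact hm k (by omega)
      simp [hd_def, hme]
  have := h6.sub hd
  have heq : (fun n : ℕ => 1 / ((n : ℝ) + 1) ^ 2 - d n)
      = fun n : ℕ => ((-1 : ℝ)) ^ n / ((n : ℝ) + 1) ^ 2 := by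
    funext n
    rcases Nat.even_or_odd n with h | h
    · simp [hd_def, h, h.neg_one_pow]
    · simp only [hd_def, if_neg (Nat.not_even_iff_odd.mpr h), h.neg_one_pow]
      ring
  rw [heq] at this
  convert this using 1
  · rfl
  ring

lemma exp_int (c : ℝ) (hc : 0 < c) : ∫ x in Ioi (0:ℝ), Real.exp (-(c*x)) = 1/c := by
  have h := integral_comp_mul_left_Ioi (fun y : ℝ => Real.exp (-y)) 0 hc
  simp only [mul_zero] at h
  rw [show (fun x : ℝ => Real.exp (-(c*x))) = fun x : ℝ => (fun y : ℝ => Real.exp (-y)) (c*x)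
    from rfl, h, integral_exp_neg_Ioi]
  simp [smul_eq_mul, one_div]

lemma log11_integral : ∫ x in Ioi (0:ℝ), Real.log (1 + Real.exp (-2*x)) = π ^ 2 / 24 := by
  set F : ℕ → ℝ → ℝ := fun n x => ((-1 : ℝ)) ^ n / ((n : ℝ) + 1) * Real.exp (-((2*((n:ℝ)+1))*x))
    with hF_def
  have hFi : ∀ n : ℕ, Integrable (F n) (volume.restrict (Ioi 0)) := by
    intro n
    have hpos : (0:ℝ) < 2*((n:ℝ)+1) := by positivity
    have h := (exp_neg_integrableOn_Ioi 0 hpos).const_mul (((-1 : ℝ)) ^ n / ((n : ℝ) + 1))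
    refine h.congr (Eventually.of_forall fun x => ?_)
    simp [hF_def, neg_mul]
  have hnorm : ∀ n : ℕ, ∫ x in Ioi (0:ℝ), ‖F n x‖ = 1/(2*((n:ℝ)+1)^2) := by
    intro n
    have hpos : (0:ℝ) < 2*((n:ℝ)+1) := by positivity
    have heq : ∀ x : ℝ, ‖F n x‖ = (1/((n:ℝ)+1)) * Real.exp (-((2*((n:ℝ)+1))*x)) := by
      intro x
      rw [hF_def]
      rw [show (fun (n : ℕ) (x : ℝ) => ((-1 : ℝ)) ^ n / ((n : ℝ) + 1)
        * Real.exp (-((2*((n:ℝ)+1))*x))) n x = ((-1 : ℝ)) ^ n / ((n : ℝ) + 1)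
        * Real.exp (-((2*((n:ℝ)+1))*x)) from rfl]
      rw [norm_mul, Real.norm_eq_abs, Real.norm_eq_abs, Real.abs_exp, abs_div, abs_pow,
        abs_neg, abs_one, one_pow, abs_of_pos (by positivity : (0:ℝ) < (n:ℝ)+1)]
    simp_rw [heq]
    rw [integral_const_mul _ _, exp_int _ hpos]
    field_simp
  have hsum : Summable (fun n : ℕ => ∫ x in Ioi (0:ℝ), ‖F n x‖) := by
    simp_rw [hnorm]
    have h1 : Summable (fun n : ℕ => 1/((n:ℝ)+1) ^ 2) := alt_zeta_two.summable.abs.congr ?_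
    · refine (h1.div_const 2).congr fun n => ?_
      field_simp
    · intro n
      rw [abs_div, abs_pow, abs_neg, abs_one, one_pow, abs_of_pos (by positivity)]
  have hinter := MeasureTheory.integral_tsum_of_summable_integral_norm hFi hsum
  have hpt : ∀ x ∈ Ioi (0:ℝ), Real.log (1 + Real.exp (-2*x)) = ∑' n, F n x := by
    intro x hx
    have hq : Real.exp (-2*x) < 1 := by
      rw [Real.exp_lt_one_iff]
      have : (0:ℝ) < x := hx
      linarith
    have habs : |(-Real.exp (-2*x))| < 1 := by
      rw [abs_neg, abs_of_pos (Real.exp_pos _)]; exact hq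
    have h := (Real.hasSum_pow_div_log_of_abs_lt_one habs).neg
    rw [show (1 : ℝ) - -Real.exp (-2*x) = 1 + Real.exp (-2*x) by ring, neg_neg] at h
    have h2 : (fun n : ℕ => -((-Real.exp (-2*x)) ^ (n+1) / ((n:ℝ)+1))) = fun n => F n x := by
      funext n
      simp only [hF_def]
      have hexp : Real.exp (-((2*((n:ℝ)+1))*x)) = Real.exp (-2*x) ^ (n+1) := by
        rw [← Real.exp_nat_mul]
        push_cast
        ring_nf
      rw [hexp, neg_pow]
      push_cast
      ring
    rw [h2] at h
    exact h.tsum_eq.symm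
  have hlhs : ∫ x in Ioi (0:ℝ), Real.log (1 + Real.exp (-2*x))
      = ∫ x in Ioi (0:ℝ), ∑' n, F n x := by
    refine setIntegral_congr_fun measurableSet_Ioi fun x hx => hpt x hx
  rw [hlhs, ← hinter]
  have hFint : ∀ n : ℕ, ∫ x in Ioi (0:ℝ), F n x
      = (1/2) * (((-1 : ℝ)) ^ n / ((n : ℝ) + 1) ^ 2) := by
    intro n
    have hpos : (0:ℝ) < 2*((n:ℝ)+1) := by positivity
    rw [hF_def]
    simp only []
    rw [integral_const_mul _ _, exp_int _ hpos]
    field_simp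
  simp_rw [hFint]
  rw [(alt_zeta_two.mul_left (1/2:ℝ)).tsum_eq]
  ring

lemma g11_integrableOn : IntegrableOn g11 (Ioi 0) :=
  h11_integrableOn.congr (Eventually.of_forall fun x => h11_eq_g11 x)

lemma phi11_zero : phi11 0 = 0 := by
  unfold phi11
  norm_num

lemma h11_integral_Ioi : ∫ x in Ioi (0:ℝ), h11 x = π ^ 2 / 90 := by
  have f'int : IntegrableOn
      (fun x : ℝ => g11 x - (4/15) * Real.log (1 + Real.exp (-2*x))) (Ioi 0) :=
    g11_integrableOn.sub (log11_integrableOn.const_mul (4/15))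
  have key := integral_Ioi_of_hasDerivAt_of_tendsto' (a := 0)
    (fun x _ => phi11_hasDerivAt x) f'int phi11_tendsto
  rw [phi11_zero, sub_zero] at key
  have hsplit : ∫ x in Ioi (0:ℝ), h11 x
      = (∫ x in Ioi (0:ℝ), (g11 x - (4/15) * Real.log (1 + Real.exp (-2*x))))
        + ∫ x in Ioi (0:ℝ), (4/15) * Real.log (1 + Real.exp (-2*x)) := by
    rw [← integral_add f'int (log11_integrableOn.const_mul (4/15))]
    refine setIntegral_congr_fun measurableSet_Ioi fun x _ => ?_
    rw [h11_eq_g11]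
    ring
  rw [hsplit, key, integral_const_mul _ _, log11_integral]
  ring

lemma h11_even (x : ℝ) : h11 |x| = h11 x := by
  rcases le_or_gt 0 x with h | h
  · rw [abs_of_nonneg h]
  · rw [abs_of_neg h]
    unfold h11
    rw [Real.tanh_neg, Real.cosh_neg]
    ring

lemma h11_integral : ∫ x : ℝ, h11 x = π ^ 2 / 45 := by
  have h1 : ∫ x : ℝ, h11 x = ∫ x : ℝ, h11 |x| :=
    integral_congr_ae (Eventually.of_forall fun x => (h11_even x).symm)
  rw [h1, integral_comp_abs (f := h11), h11_integral_Ioi]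
  ring

lemma tanh_hasDerivAt (y : ℝ) : HasDerivAt Real.tanh (1 / Real.cosh y ^ 2) y := by
  have h := (Real.hasDerivAt_sinh y).div (Real.hasDerivAt_cosh y) (Real.cosh_pos y).ne'
  have hfun : Real.sinh / Real.cosh = Real.tanh :=
    funext fun x => (Real.tanh_eq_sinh_div_cosh x).symm
  rw [hfun] at h
  convert h using 1
  · rfl
  · rfl
  rw [show Real.cosh y * Real.cosh y - Real.sinh y * Real.sinh y = 1 by
    have := Real.cosh_sq_sub_sinh_sq y; nlinarith]

/-- `∫ x² tanh(x)² sech(x)⁴ dx = π²/45`; equivalently, for `a, b > 0` and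
`U(z) = tanh((b/a)z)`, `∫ z² U² U'² dz = (π²/45)(a/b)`. -/
theorem stmt_11 (a b : ℝ) (ha : 0 < a) (hb : 0 < b)
    (U : ℝ → ℝ) (hU : U = fun z => Real.tanh ((b / a) * z)) :
    (∫ x : ℝ, x ^ 2 * Real.tanh x ^ 2 * (1 / Real.cosh x) ^ 4 = π ^ 2 / 45) ∧
    ∫ z : ℝ, z ^ 2 * (U z) ^ 2 * (deriv U z) ^ 2 = (π ^ 2 / 45) * (a / b) := by
  have h1 : ∫ x : ℝ, x ^ 2 * Real.tanh x ^ 2 * (1 / Real.cosh x) ^ 4 = π ^ 2 / 45 :=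
    h11_integral
  refine ⟨h1, ?_⟩
  set c : ℝ := b / a with hc_def
  have hc : 0 < c := div_pos hb ha
  have hU' : ∀ z : ℝ, HasDerivAt U (1 / Real.cosh (c*z) ^ 2 * (c * 1)) z := by
    intro z
    rw [hU]
    exact (tanh_hasDerivAt (c*z)).comp z ((hasDerivAt_id z).const_mul c)
  have hderiv : ∀ z : ℝ, deriv U z = c / Real.cosh (c*z) ^ 2 := by
    intro z
    rw [(hU' z).deriv]
    ring
  have hint : (fun z : ℝ => z ^ 2 * (U z) ^ 2 * (deriv U z) ^ 2) = fun z => h11 (c * z) := by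
    funext z
    rw [hderiv z, hU]
    unfold h11
    have := (Real.cosh_pos (c*z)).ne'
    field_simp
  rw [hint, Measure.integral_comp_mul_left h11 c, h11_integral, smul_eq_mul,
    abs_of_pos (inv_pos.mpr hc)]
  rw [hc_def]
  field_simp
end
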